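/- arXiv:2101.05572 — 2 statements merged into one kernel-verified Lean document; each statement's English description precedes it below -/
import Mathlib

section
/- For each t > 0, the single-point set X_t = X ∩ S¹(0;t) of the spiral X = {r·e^{2πi/r} : r ∈ (0,1]} ∪ {0} satisfies d_{X_t} = ‖·‖ (trivially 1-LNE), since X ∩ S¹(0;t) = {t·e^{2πi/t}} for every t ∈ (0,1]. Hence X is 1-LLNE at 0 but not LNE at 0. -/
open Set Metric Filter Topology Pointwise

noncomputable def innerDist {E : Type*} [NormedAddCommGroup E] (Z : Set E) (x y : E) : ENNReal :=
  ⨅ (γ : ℝ → E) (_ : ContinuousOn γ (Set.Icc 0 1)) (_ : Set.MapsTo γ (Set.Icc 0 1) Z)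
    (_ : γ 0 = x) (_ : γ 1 = y), eVariationOn γ (Set.Icc 0 1)

def IsLNE {E : Type*} [NormedAddCommGroup E] (Z : Set E) (C : ℝ) : Prop :=
  ∀ x ∈ Z, ∀ y ∈ Z, innerDist Z x y ≤ ENNReal.ofReal (C * ‖x - y‖)

/-- The spiral `r ↦ r·e^{2πi/r}`, `r ∈ (0,1]`, together with the origin. -/
noncomputable def spiralSet : Set ℂ :=
  {c : ℂ | ∃ r : ℝ, r ∈ Set.Ioc (0:ℝ) 1 ∧
    c = (r : ℂ) * Complex.exp (2 * Real.pi * Complex.I / (r : ℂ))} ∪ {0}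

/-!
Along the spiral the modulus is a homeomorphism onto `[0, 1]`, so every circle `S¹(0;t)` meets it
in one point, and such a singleton is trivially LNE. On the other hand a path in the spiral from
`0` to a point of modulus `r` must pass, in increasing order of modulus, through all the points
`spiralPoint (2 / m) = (-1) ^ m · 2 / m` with `2 / m ≤ r`; consecutive ones are at distance
`2 / m + 2 / (m + 1)`, so the harmonic series forces every such path to have infinite length.
-/

theorem exists_monotoneOn_rightInvOn_of_continuousOn {g : ℝ → ℝ} {a b : ℝ} (hab : a ≤ b)
    (hg : ContinuousOn g (Icc a b)) :
    ∃ φ : ℝ → ℝ, MonotoneOn φ (Icc (g a) (g b)) ∧ MapsTo φ (Icc (g a) (g b)) (Icc a b) ∧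
      RightInvOn φ g (Icc (g a) (g b)) := by
  set S : ℝ → Set ℝ := fun s => Icc a b ∩ g ⁻¹' Ici s
  have hS_bdd : ∀ s, BddBelow (S s) := fun s => ⟨a, fun t ht => ht.1.1⟩
  have hS_ne : ∀ s ≤ g b, (S s).Nonempty := fun s hs => ⟨b, right_mem_Icc.2 hab, hs⟩
  have hS_mem : ∀ s ≤ g b, sInf (S s) ∈ S s := fun s hs =>
    (hg.preimage_isClosed_of_isClosed isClosed_Icc isClosed_Ici).csInf_mem (hS_ne s hs) (hS_bdd s)
  -- `sInf (S s)` is the first time `g` reaches `s`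
  refine ⟨fun s => sInf (S s), fun s hs s' hs' hss' => ?_, fun s hs => (hS_mem s hs.2).1,
    fun s hs => ?_⟩
  · exact csInf_le_csInf (hS_bdd s) (hS_ne s' hs'.2) fun t ht => ⟨ht.1, hss'.trans ht.2⟩
  · obtain ⟨hmem, hge⟩ := hS_mem s hs.2
    obtain ⟨t, ht, hgt⟩ := intermediate_value_Icc hmem.1 (hg.mono (Icc_subset_Icc_right hmem.2))
      ⟨hs.1, hge⟩
    have : sInf (S s) ≤ t :=
      csInf_le (hS_bdd s) ⟨⟨ht.1, ht.2.trans hmem.2⟩, hgt.ge⟩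
    rwa [le_antisymm ht.2 this] at hgt

theorem eVariationOn.le_comp_of_continuousOn {E : Type*} [PseudoEMetricSpace E] (f : ℝ → E)
    {g : ℝ → ℝ} {a b : ℝ} (hab : a ≤ b) (hg : ContinuousOn g (Icc a b)) :
    eVariationOn f (Icc (g a) (g b)) ≤ eVariationOn (f ∘ g) (Icc a b) := by
  obtain ⟨φ, hφ_mono, hφ_maps, hgφ⟩ := exists_monotoneOn_rightInvOn_of_continuousOn hab hg
  calc eVariationOn f (Icc (g a) (g b))
      = eVariationOn ((f ∘ g) ∘ φ) (Icc (g a) (g b)) :=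
        eVariationOn.eq_of_eqOn fun s hs => by simp [hgφ hs]
    _ ≤ eVariationOn (f ∘ g) (Icc a b) :=
        eVariationOn.comp_le_of_monotoneOn (f ∘ g) φ hφ_mono hφ_maps

theorem innerDist_self_eq_zero {E : Type*} [NormedAddCommGroup E] {Z : Set E} {x : E}
    (hx : x ∈ Z) :
    innerDist Z x x = 0 :=
  le_antisymm (iInf₂_le_of_le (fun _ => x) continuousOn_const <| iInf₂_le_of_le
    (fun _ _ => hx) rfl <| iInf_le_of_le rfl
    (eVariationOn.constant_on (subsingleton_singleton.anti (by rintro _ ⟨_, _, rfl⟩; rfl))).le)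
    zero_le

theorem Set.Subsingleton.isLNE {E : Type*} [NormedAddCommGroup E] {Z : Set E} (hZ : Z.Subsingleton)
    (C : ℝ) : IsLNE Z C := by
  intro x hx y hy
  rw [hZ hx hy, innerDist_self_eq_zero hy]
  exact zero_le

noncomputable def spiralPoint (r : ℝ) : ℂ :=
  r * Complex.exp (2 * Real.pi * Complex.I / r)

-- `2πi / 0 = 0` in Lean, so `spiralPoint ‖c‖ = c` holds on all of `spiralSet`, origin included.
@[simp]
theorem spiralPoint_zero : spiralPoint 0 = 0 := by
  simp [spiralPoint]

theorem norm_spiralPoint {r : ℝ} (hr : 0 ≤ r) : ‖spiralPoint r‖ = r := by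
  have h : 2 * Real.pi * Complex.I / r = ((2 * Real.pi / r : ℝ) : ℂ) * Complex.I := by
    push_cast; ring
  rw [spiralPoint, norm_mul, h, Complex.norm_exp_ofReal_mul_I, Complex.norm_real,
    Real.norm_of_nonneg hr, mul_one]

theorem spiralPoint_norm_of_mem_spiralSet {c : ℂ} (hc : c ∈ spiralSet) : spiralPoint ‖c‖ = c := by
  rcases hc with ⟨r, hr, rfl⟩ | rfl
  · exact congrArg spiralPoint (norm_spiralPoint hr.1.le)
  · simp

theorem spiralSet_inter_sphere {t : ℝ} (ht : t ∈ Ioc 0 1) :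
    spiralSet ∩ sphere 0 t = {spiralPoint t} := by
  ext c
  constructor
  · rintro ⟨hc, hct⟩
    rw [mem_sphere_zero_iff_norm] at hct
    rw [mem_singleton_iff, ← spiralPoint_norm_of_mem_spiralSet hc, hct]
  · rintro rfl
    exact ⟨Or.inl ⟨t, ht, rfl⟩, mem_sphere_zero_iff_norm.2 (norm_spiralPoint ht.1.le)⟩

theorem tendsto_spiralPoint_nhdsGT_zero : Tendsto spiralPoint (𝓝[>] 0) (𝓝 0) := by
  rw [tendsto_zero_iff_norm_tendsto_zero]
  refine (tendsto_nhdsWithin_of_tendsto_nhds tendsto_id).congr' ?_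
  filter_upwards [self_mem_nhdsWithin] with r hr
  exact (norm_spiralPoint (le_of_lt hr)).symm

theorem spiralPoint_two_div_natCast (m : ℕ) :
    spiralPoint (2 / m) = ((2 / m : ℝ) : ℂ) * (-1) ^ m := by
  rcases eq_or_ne m 0 with rfl | hm
  · simp
  have hexp : 2 * Real.pi * Complex.I / ((2 / m : ℝ) : ℂ) = m * (Real.pi * Complex.I) := by
    push_cast
    field_simp
  rw [spiralPoint, hexp, Complex.exp_nat_mul, Complex.exp_pi_mul_I]

theorem dist_spiralPoint_two_div_natCast_succ (m : ℕ) :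
    dist (spiralPoint (2 / (m + 1 : ℕ))) (spiralPoint (2 / m)) = 2 / (m + 1 : ℕ) + 2 / m := by
  rw [spiralPoint_two_div_natCast, spiralPoint_two_div_natCast, Complex.dist_eq,
    show ((2 / (m + 1 : ℕ) : ℝ) : ℂ) * (-1) ^ (m + 1) - ((2 / m : ℝ) : ℂ) * (-1) ^ m
      = -(-1) ^ m * ((2 / (m + 1 : ℕ) + 2 / m : ℝ) : ℂ) by push_cast; ring]
  rw [norm_mul, norm_neg, norm_pow, norm_neg, norm_one, one_pow, one_mul, Complex.norm_real,
    Real.norm_of_nonneg (by positivity)]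

theorem eVariationOn_spiralPoint_two_div_Ici (N : ℕ) :
    eVariationOn (fun x => spiralPoint (2 / x)) (Ici (N : ℝ)) = ⊤ := by
  set a : ℕ → ℝ := fun j => 2 / (N + j : ℕ)
  have ha_nonneg : ∀ j, 0 ≤ a j := fun j => by positivity
  have ha : ¬ Summable a := by
    intro h
    refine Real.not_summable_one_div_natCast ((summable_nat_add_iff N).1
      ((h.mul_left (1 / 2)).congr fun j => ?_))
    simp only [a, add_comm N j]
    ring
  have hsum_le : ∀ K, ∑ j ∈ Finset.range K, ENNReal.ofReal (a j) ≤
      eVariationOn (fun x => spiralPoint (2 / x)) (Ici (N : ℝ)) := by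
    intro K
    refine le_trans (Finset.sum_le_sum fun j _ => ?_)
      (eVariationOn.sum_le (u := fun j => ((N + j : ℕ) : ℝ))
        (fun i j hij => by simpa using hij) (fun j => by simp))
    rw [edist_dist, ← add_assoc, dist_spiralPoint_two_div_natCast_succ]
    exact ENNReal.ofReal_le_ofReal (le_add_of_nonneg_left (by positivity))
  have htsum : ∑' j, ENNReal.ofReal (a j) = ⊤ := by
    by_contra h
    exact ha (by simpa [ENNReal.toReal_ofReal (ha_nonneg _)] using ENNReal.summable_toReal h)
  exact top_le_iff.1 (htsum ▸ ENNReal.tsum_le_of_sum_range_le hsum_le)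

theorem eVariationOn_spiralPoint_Icc_zero {r : ℝ} (hr : 0 < r) :
    eVariationOn spiralPoint (Icc 0 r) = ⊤ := by
  obtain ⟨N, hN⟩ := exists_nat_ge (2 / r)
  have hN_pos : (0 : ℝ) < N := lt_of_lt_of_le (by positivity) hN
  refine top_le_iff.1 ((eVariationOn_spiralPoint_two_div_Ici N).symm.le.trans ?_)
  refine eVariationOn.comp_le_of_antitoneOn spiralPoint (fun x : ℝ => 2 / x)
    (fun x hx y _ hxy => div_le_div_of_nonneg_left zero_le_two (hN_pos.trans_le hx) hxy)
    (fun x hx => ⟨div_nonneg zero_le_two (hN_pos.trans_le hx).le, ?_⟩)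
  calc 2 / x ≤ 2 / N := div_le_div_of_nonneg_left zero_le_two hN_pos hx
    _ ≤ r := (div_le_iff₀ hN_pos).2 (by linarith [(div_le_iff₀ hr).1 hN])

theorem innerDist_zero_spiralPoint_eq_top {Z : Set ℂ} (hZ : Z ⊆ spiralSet) {r : ℝ} (hr : 0 < r) :
    innerDist Z 0 (spiralPoint r) = ⊤ := by
  simp only [innerDist, iInf_eq_top]
  intro γ hγ hmaps hγ0 hγ1
  have hγ_eq : EqOn γ (spiralPoint ∘ fun t => ‖γ t‖) (Icc 0 1) := fun t ht =>
    (spiralPoint_norm_of_mem_spiralSet (hZ (hmaps ht))).symm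
  have hnorm_γ : ‖γ 0‖ = 0 ∧ ‖γ 1‖ = r :=
    ⟨by rw [hγ0, norm_zero], by rw [hγ1, norm_spiralPoint hr.le]⟩
  refine top_le_iff.1 ?_
  calc ⊤ = eVariationOn spiralPoint (Icc ‖γ 0‖ ‖γ 1‖) := by
        rw [hnorm_γ.1, hnorm_γ.2, eVariationOn_spiralPoint_Icc_zero hr]
    _ ≤ eVariationOn γ (Icc 0 1) := by
        rw [eVariationOn.eq_of_eqOn hγ_eq]
        exact eVariationOn.le_comp_of_continuousOn spiralPoint zero_le_one hγ.norm

theorem stmt_7 :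
    (∀ t ∈ Set.Ioc (0:ℝ) 1, spiralSet ∩ Metric.sphere (0 : ℂ) t =
      {(t : ℂ) * Complex.exp (2 * Real.pi * Complex.I / (t : ℂ))}) ∧
    (∀ t ∈ Set.Ioc (0:ℝ) 1, IsLNE (spiralSet ∩ Metric.sphere (0 : ℂ) t) 1) ∧
    ¬ ∃ U ∈ 𝓝 (0 : ℂ), ∃ C : ℝ, IsLNE (spiralSet ∩ U) C := by
  refine ⟨fun t ht => spiralSet_inter_sphere ht,
    fun t ht => (spiralSet_inter_sphere ht ▸ subsingleton_singleton).isLNE 1, ?_⟩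
  rintro ⟨U, hU, C, hC⟩
  obtain ⟨r, hrU, hr⟩ :=
    ((tendsto_spiralPoint_nhdsGT_zero.eventually hU).and (Ioc_mem_nhdsGT zero_lt_one)).exists
  have hLNE := hC 0 ⟨Or.inr rfl, mem_of_mem_nhds hU⟩ (spiralPoint r) ⟨Or.inl ⟨r, hr, rfl⟩, hrU⟩
  rw [innerDist_zero_spiralPoint_eq_top inter_subset_left hr.1, top_le_iff] at hLNE
  exact ENNReal.ofReal_ne_top hLNE
end

section
/- Let X ⊆ ℝ^m be a closed set with 0 ∈ X, let X_t = ((1/t)·X) ∩ S^{m−1} for t > 0 and X₀ = C(X,0) ∩ S^{m−1}, where C(X,0) is the tangent cone of X at 0. Suppose X_t → X₀ in the Hausdorff metric as t → 0⁺ and there exist C ≥ 1, ε > 0 such that d_{X_t}(x,y) ≤ C‖x−y‖ for all x,y ∈ X_t and all t ∈ (0,ε]. Then d_{X₀}(v,w) ≤ C‖v−w‖ for all v,w ∈ X₀, i.e. X₀ is C-LNE. -/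
open Set Metric Filter Topology Pointwise

/-- The tangent cone of `X` at `0`: limits of `(1/tᵢ)·xᵢ` with `xᵢ ∈ X`, `xᵢ → 0`, `tᵢ > 0`. -/
def tangentCone0 {E : Type*} [NormedAddCommGroup E] [NormedSpace ℝ E] (X : Set E) : Set E :=
  {v | ∃ (x : ℕ → E) (t : ℕ → ℝ), (∀ i, x i ∈ X) ∧ (∀ i, 0 < t i) ∧
    Filter.Tendsto x Filter.atTop (nhds 0) ∧
    Filter.Tendsto (fun i => (t i)⁻¹ • x i) Filter.atTop (nhds v)}

open scoped NNReal

/-!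
Choose scales `tₙ → 0⁺` with `X_{tₙ}` nonempty (the Hausdorff hypothesis is void at scales where
`X_t = ∅`, since `hausdorffDist ∅ _ = 0`); they exist because a unit vector of the tangent cone is
a limit of normalized points of `X`. Points of `X₀` are limits of points of `X_{tₙ}`, and
almost shortest paths in `X_{tₙ}` between these, reparametrized by arc length, are uniformly
Lipschitz curves in the compact unit sphere. Their pointwise limit along an ultrafilter is a
Lipschitz curve in the closed set `X₀` whose length is at most the limit of the lengths,
`C ‖v - w‖`.
-/

section ArcLength

variable {α E : Type*} [LinearOrder α] [PseudoMetricSpace E]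

theorem dist_le_abs_variationOnFromTo {f : α → E} {s : Set α}
    (hf : LocallyBoundedVariationOn f s) {a b : α} (ha : a ∈ s) (hb : b ∈ s) :
    dist (f a) (f b) ≤ |variationOnFromTo f s a b| := by
  wlog hab : a ≤ b generalizing a b
  · rw [dist_comm, variationOnFromTo.eq_neg_swap, abs_neg]
    exact this hb ha (le_of_not_ge hab)
  rw [variationOnFromTo.eq_of_le f s hab, abs_of_nonneg ENNReal.toReal_nonneg, dist_edist]
  exact ENNReal.toReal_mono (hf a b ha hb)
    (eVariationOn.edist_le f ⟨ha, le_rfl, hab⟩ ⟨hb, hab, le_rfl⟩)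

theorem variationOnFromTo.continuousOn [TopologicalSpace α] [OrderTopology α] {f : α → E}
    {s : Set α} (hf : LocallyBoundedVariationOn f s) (hc : ContinuousOn f s) {a : α}
    (ha : a ∈ s) : ContinuousOn (variationOnFromTo f s a) s := by
  intro b hb
  have hleft := variationOnFromTo.tendsto_left ha hb hf ((hc b hb).mono inter_subset_left)
  have hright := variationOnFromTo.tendsto_right ha hb hf ((hc b hb).mono inter_subset_left)
  rw [dist_self, sub_zero] at hleft
  rw [dist_self, add_zero] at hright
  have hs : s ⊆ insert b ((s ∩ Iio b) ∪ (s ∩ Ioi b)) := fun x hx => by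
    rcases lt_trichotomy x b with h | rfl | h
    exacts [Or.inr (Or.inl ⟨hx, h⟩), Or.inl rfl, Or.inr (Or.inr ⟨hx, h⟩)]
  exact (continuousWithinAt_insert_self.2 (continuousWithinAt_union.2 ⟨hleft, hright⟩)).mono hs

theorem ContinuousOn.exists_lipschitzOnWith_reparam {E : Type*} [MetricSpace E] {γ : ℝ → E}
    (hγ : ContinuousOn γ (Icc 0 1)) (hfin : eVariationOn γ (Icc 0 1) ≠ ⊤) :
    ∃ σ : ℝ → E, LipschitzOnWith (eVariationOn γ (Icc 0 1)).toNNReal σ (Icc 0 1) ∧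
      MapsTo σ (Icc 0 1) (γ '' Icc 0 1) ∧ σ 0 = γ 0 ∧ σ 1 = γ 1 := by
  set s : Set ℝ := Icc 0 1
  have h0 : (0 : ℝ) ∈ s := left_mem_Icc.2 zero_le_one
  have h1 : (1 : ℝ) ∈ s := right_mem_Icc.2 zero_le_one
  have hbv : LocallyBoundedVariationOn γ s := fun _ _ _ _ =>
    ne_top_of_le_ne_top hfin (eVariationOn.mono γ inter_subset_left)
  set V := variationOnFromTo γ s 0
  set ℓ := (eVariationOn γ s).toNNReal
  have hV0 : V 0 = 0 := variationOnFromTo.self γ s 0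
  have hV1 : V 1 = ℓ := by
    show variationOnFromTo γ s 0 1 = _
    rw [variationOnFromTo.eq_of_le γ s zero_le_one, inter_self]; rfl
  have hdist : ∀ a ∈ s, ∀ b ∈ s, dist (γ a) (γ b) ≤ |V b - V a| := fun a ha b hb => by
    have hsub : V b - V a = variationOnFromTo γ s a b := variationOnFromTo.sub_right hbv h0 hb ha
    exact hsub ▸ dist_le_abs_variationOnFromTo hbv ha hb
  have hθ : ∀ r, ∃ θ ∈ s, r ∈ s → V θ = ℓ * r := fun r => by
    by_cases hr : r ∈ s
    · have hmem : (ℓ : ℝ) * r ∈ Icc (V 0) (V 1) := by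
        rw [hV0, hV1]
        exact ⟨mul_nonneg ℓ.2 hr.1, mul_le_of_le_one_right ℓ.2 hr.2⟩
      obtain ⟨θ, hθ, hVθ⟩ :=
        intermediate_value_Icc zero_le_one (variationOnFromTo.continuousOn hbv hγ h0) hmem
      exact ⟨θ, hθ, fun _ => hVθ⟩
    · exact ⟨0, h0, fun h => absurd h hr⟩
  choose θ hθs hVθ using hθ
  refine ⟨γ ∘ θ, LipschitzOnWith.of_dist_le_mul fun a ha b hb => ?_,
    fun r _ => mem_image_of_mem γ (hθs r), ?_, ?_⟩
  · calc dist (γ (θ a)) (γ (θ b)) ≤ |V (θ b) - V (θ a)| := hdist _ (hθs a) _ (hθs b)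
      _ = ℓ * dist a b := by
        rw [hVθ a ha, hVθ b hb, ← mul_sub, abs_mul, NNReal.abs_eq, Real.dist_eq, abs_sub_comm]
  · refine (dist_le_zero.1 ((hdist _ (hθs 0) _ h0).trans_eq ?_))
    rw [hVθ 0 h0, hV0, mul_zero, sub_zero, abs_zero]
  · refine (dist_le_zero.1 ((hdist _ (hθs 1) _ h1).trans_eq ?_))
    rw [hVθ 1 h1, hV1, mul_one, sub_self, abs_zero]

end ArcLength

theorem LipschitzOnWith.eVariationOn_Icc_le {E : Type*} [PseudoEMetricSpace E] {f : ℝ → E}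
    {K : ℝ≥0} {a b : ℝ} (hf : LipschitzOnWith K f (Icc a b)) (hab : a ≤ b) :
    eVariationOn f (Icc a b) ≤ K * ENNReal.ofReal (b - a) := by
  have hid : eVariationOn id (Icc a b) = ENNReal.ofReal (b - a) := by
    simpa only [inter_self, id_eq] using
      monotoneOn_id.eVariationOn_eq (s := Icc a b) (left_mem_Icc.2 hab) (right_mem_Icc.2 hab)
  exact hid ▸ hf.comp_eVariationOn_le (g := id) (mapsTo_id _)

theorem LipschitzOnWith.of_tendsto {ι α E : Type*} [PseudoMetricSpace α] [PseudoMetricSpace E]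
    {l : Filter ι} [l.NeBot] {σ : ι → α → E} {Γ : α → E} {s : Set α} {K : ι → ℝ≥0} {K₀ : ℝ≥0}
    (hK : Tendsto K l (𝓝 K₀)) (hσ : ∀ᶠ i in l, LipschitzOnWith (K i) (σ i) s)
    (hΓ : ∀ a ∈ s, Tendsto (fun i => σ i a) l (𝓝 (Γ a))) : LipschitzOnWith K₀ Γ s :=
  LipschitzOnWith.of_dist_le_mul fun a ha b hb =>
    le_of_tendsto_of_tendsto ((hΓ a ha).dist (hΓ b hb))
      ((NNReal.continuous_coe.tendsto K₀ |>.comp hK).mul_const _)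
      (hσ.mono fun _ hi => hi.dist_le_mul a ha b hb)

theorem IsCompact.exists_tendsto_ultrafilter_of_mapsTo {ι α E : Type*} [TopologicalSpace E]
    {K : Set E} (hK : IsCompact K) (F : Ultrafilter ι) {s : Set α} {σ : ι → α → E}
    (hσ : ∀ᶠ i in F, MapsTo (σ i) s K) :
    ∃ Γ : α → E, ∀ a ∈ s, Γ a ∈ K ∧ Tendsto (fun i => σ i a) F (𝓝 (Γ a)) := by
  have hlim : ∀ a, ∃ z, a ∈ s → z ∈ K ∧ Tendsto (fun i => σ i a) F (𝓝 z) := fun a => by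
    by_cases ha : a ∈ s
    · obtain ⟨z, hz, hFz⟩ := hK.ultrafilter_le_nhds (F.map fun i => σ i a)
        (le_principal_iff.2 (hσ.mono fun _ hi => hi ha))
      exact ⟨z, fun _ => ⟨hz, hFz⟩⟩
    · obtain ⟨i, -⟩ := hσ.exists
      exact ⟨σ i a, fun h => absurd h ha⟩
  choose Γ hΓ using hlim
  exact ⟨Γ, hΓ⟩

theorem mem_of_tendsto_hausdorffDist {ι E : Type*} [PseudoMetricSpace E] {l : Filter ι}
    [l.NeBot] {Z : ι → Set E} {Z₀ : Set E} (hZ₀ : IsClosed Z₀)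
    (hfin : ∀ i, hausdorffEDist (Z i) Z₀ ≠ ⊤)
    (hH : Tendsto (fun i => hausdorffDist (Z i) Z₀) l (𝓝 0)) {z : ι → E} {z₀ : E}
    (hz : ∀ᶠ i in l, z i ∈ Z i) (hz₀ : Tendsto z l (𝓝 z₀)) : z₀ ∈ Z₀ := by
  have hne : Z₀.Nonempty := by
    obtain ⟨i, hi⟩ := hz.exists
    refine nonempty_iff_ne_empty.2 fun h => hfin i ?_
    rw [h, hausdorffEDist_empty ⟨z i, hi⟩]
  refine (hZ₀.mem_iff_infDist_zero hne).2 (le_antisymm ?_ infDist_nonneg)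
  exact le_of_tendsto_of_tendsto (((continuous_infDist_pt Z₀).tendsto z₀).comp hz₀) hH
    (hz.mono fun i hi => infDist_le_hausdorffDist_of_mem hi (hfin i))

theorem exists_seq_tendsto_of_tendsto_hausdorffDist {E : Type*} [PseudoMetricSpace E]
    {Z : ℕ → Set E} {Z₀ : Set E} (hfin : ∀ n, hausdorffEDist (Z n) Z₀ ≠ ⊤)
    (hH : Tendsto (fun n => hausdorffDist (Z n) Z₀) atTop (𝓝 0)) {z₀ : E} (hz₀ : z₀ ∈ Z₀) :
    ∃ z : ℕ → E, (∀ n, z n ∈ Z n) ∧ Tendsto z atTop (𝓝 z₀) := by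
  have hclose : ∀ n : ℕ, ∃ z ∈ Z n, dist z z₀ < hausdorffDist (Z n) Z₀ + 1 / (n + 1) :=
    fun n => exists_dist_lt_of_hausdorffDist_lt' hz₀ (lt_add_of_pos_right _ Nat.one_div_pos_of_nat)
      (hfin n)
  choose z hzZ hz using hclose
  refine ⟨z, hzZ, tendsto_iff_dist_tendsto_zero.2 ?_⟩
  refine squeeze_zero (fun _ => dist_nonneg) (fun n => (hz n).le) ?_
  simpa only [add_zero] using hH.add tendsto_one_div_add_atTop_nhds_zero_nat

section InnerDist

variable {E : Type*} [NormedAddCommGroup E]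

theorem innerDist_le_eVariationOn {Z : Set E} {γ : ℝ → E} (hγ : ContinuousOn γ (Icc 0 1))
    (hγZ : MapsTo γ (Icc 0 1) Z) :
    innerDist Z (γ 0) (γ 1) ≤ eVariationOn γ (Icc 0 1) :=
  iInf₂_le_of_le γ hγ <| iInf₂_le_of_le hγZ rfl <| iInf_le _ rfl

theorem exists_lipschitzOnWith_of_innerDist_lt {Z : Set E} {x y : E} {K : ℝ≥0}
    (h : innerDist Z x y < K) :
    ∃ σ : ℝ → E, LipschitzOnWith K σ (Icc 0 1) ∧ MapsTo σ (Icc 0 1) Z ∧ σ 0 = x ∧ σ 1 = y := by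
  simp only [innerDist, iInf_lt_iff] at h
  obtain ⟨γ, hγ, hγZ, rfl, rfl, hvar⟩ := h
  obtain ⟨σ, hσ, hσγ, h0, h1⟩ :=
    hγ.exists_lipschitzOnWith_reparam (hvar.trans ENNReal.coe_lt_top).ne
  refine ⟨σ, hσ.weaken ?_, hσγ.mono_right hγZ.image_subset, h0, h1⟩
  simpa only [ENNReal.toNNReal_coe] using ENNReal.toNNReal_mono ENNReal.coe_ne_top hvar.le

theorem innerDist_le_of_tendsto_hausdorffDist {ι : Type*} {l : Filter ι} [l.NeBot]
    {Z : ι → Set E} {Z₀ K : Set E} (hK : IsCompact K) (hZK : ∀ i, Z i ⊆ K) (hZ₀ : IsClosed Z₀)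
    (hfin : ∀ i, hausdorffEDist (Z i) Z₀ ≠ ⊤)
    (hH : Tendsto (fun i => hausdorffDist (Z i) Z₀) l (𝓝 0)) {x y : ι → E} {x₀ y₀ : E}
    (hx : Tendsto x l (𝓝 x₀)) (hy : Tendsto y l (𝓝 y₀)) {c : ι → ℝ≥0} {c₀ : ℝ≥0}
    (hc : Tendsto c l (𝓝 c₀)) (hxy : ∀ᶠ i in l, innerDist (Z i) (x i) (y i) < c i) :
    innerDist Z₀ x₀ y₀ ≤ c₀ := by
  obtain ⟨σ, hσ⟩ := (hxy.mono fun _ hi => exists_lipschitzOnWith_of_innerDist_lt hi).choice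
  set F := Ultrafilter.of l
  have hFl : (F : Filter ι) ≤ l := Ultrafilter.of_le l
  have hσF := hσ.filter_mono hFl
  obtain ⟨Γ, hΓ⟩ := hK.exists_tendsto_ultrafilter_of_mapsTo F
    (hσF.mono fun i hi => hi.2.1.mono_right (hZK i))
  have hΓlip : LipschitzOnWith c₀ Γ (Icc 0 1) :=
    LipschitzOnWith.of_tendsto (hc.mono_left hFl) (hσF.mono fun _ hi => hi.1)
      fun a ha => (hΓ a ha).2
  have hΓ0 : Γ 0 = x₀ := tendsto_nhds_unique (hΓ 0 (left_mem_Icc.2 zero_le_one)).2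
    ((hx.mono_left hFl).congr' (hσF.mono fun _ hi => hi.2.2.1.symm))
  have hΓ1 : Γ 1 = y₀ := tendsto_nhds_unique (hΓ 1 (right_mem_Icc.2 zero_le_one)).2
    ((hy.mono_left hFl).congr' (hσF.mono fun _ hi => hi.2.2.2.symm))
  have hΓZ₀ : MapsTo Γ (Icc 0 1) Z₀ := fun a ha =>
    mem_of_tendsto_hausdorffDist hZ₀ hfin (hH.mono_left hFl) (hσF.mono fun _ hi => hi.2.1 ha)
      (hΓ a ha).2
  calc innerDist Z₀ x₀ y₀ ≤ eVariationOn Γ (Icc 0 1) :=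
        hΓ0 ▸ hΓ1 ▸ innerDist_le_eVariationOn hΓlip.continuousOn hΓZ₀
    _ ≤ c₀ * ENNReal.ofReal (1 - 0) := hΓlip.eVariationOn_Icc_le zero_le_one
    _ = c₀ := by norm_num

theorem IsLNE.of_tendsto_hausdorffDist {Z : ℕ → Set E} {Z₀ K : Set E} {C : ℝ}
    (hK : IsCompact K) (hZK : ∀ n, Z n ⊆ K) (hZ₀K : Z₀ ⊆ K) (hZ₀ : IsClosed Z₀)
    (hne : ∀ n, (Z n).Nonempty) (hH : Tendsto (fun n => hausdorffDist (Z n) Z₀) atTop (𝓝 0))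
    (hZ : ∀ n, IsLNE (Z n) C) : IsLNE Z₀ C := by
  intro x hx y hy
  have hfin : ∀ n, hausdorffEDist (Z n) Z₀ ≠ ⊤ := fun n =>
    hausdorffEDist_ne_top_of_nonempty_of_bounded (hne n) ⟨x, hx⟩ (hK.isBounded.subset (hZK n))
      (hK.isBounded.subset hZ₀K)
  obtain ⟨x', hx'Z, hx'⟩ := exists_seq_tendsto_of_tendsto_hausdorffDist hfin hH hx
  obtain ⟨y', hy'Z, hy'⟩ := exists_seq_tendsto_of_tendsto_hausdorffDist hfin hH hy
  refine ENNReal.le_of_forall_pos_le_add fun δ hδ _ => ?_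
  have hc : Tendsto (fun n => (C * ‖x' n - y' n‖).toNNReal + δ) atTop
      (𝓝 ((C * ‖x - y‖).toNNReal + δ)) :=
    ((continuous_real_toNNReal.tendsto _).comp ((hx'.sub hy').norm.const_mul C)).add_const δ
  have hlt : ∀ n, innerDist (Z n) (x' n) (y' n) < ↑((C * ‖x' n - y' n‖).toNNReal + δ) :=
    fun n => (hZ n _ (hx'Z n) _ (hy'Z n)).trans_lt
      (ENNReal.coe_lt_coe.2 (lt_add_of_pos_right _ hδ))
  exact (innerDist_le_of_tendsto_hausdorffDist hK hZK hZ₀ hfin hH hx' hy' hc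
    (Eventually.of_forall hlt)).trans_eq (ENNReal.coe_add _ _)

end InnerDist

section TangentCone

variable {E : Type*} [NormedAddCommGroup E] [NormedSpace ℝ E] {X : Set E}

theorem mem_tangentCone0_iff {v : E} :
    v ∈ tangentCone0 X ↔ ∀ δ > 0, ∃ x ∈ X, ∃ t > (0 : ℝ), ‖x‖ < δ ∧ dist (t⁻¹ • x) v < δ := by
  constructor
  · rintro ⟨x, t, hxX, ht, hx, hxv⟩ δ hδ
    obtain ⟨i, hi⟩ := (((tendsto_zero_iff_norm_tendsto_zero.1 hx).eventually (gt_mem_nhds hδ)).and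
      ((tendsto_iff_dist_tendsto_zero.1 hxv).eventually (gt_mem_nhds hδ))).exists
    exact ⟨x i, hxX i, t i, ht i, hi⟩
  · intro h
    choose x hxX t ht hx hxv using fun n : ℕ => h (1 / (n + 1)) Nat.one_div_pos_of_nat
    exact ⟨x, t, hxX, ht,
      squeeze_zero_norm (fun n => (hx n).le) tendsto_one_div_add_atTop_nhds_zero_nat,
      tendsto_iff_dist_tendsto_zero.2 (squeeze_zero (fun _ => dist_nonneg) (fun n => (hxv n).le)
        tendsto_one_div_add_atTop_nhds_zero_nat)⟩

theorem isClosed_tangentCone0 : IsClosed (tangentCone0 X) := by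
  refine isClosed_of_closure_subset fun v hv => mem_tangentCone0_iff.2 fun δ hδ => ?_
  obtain ⟨w, hw, hvw⟩ := Metric.mem_closure_iff.1 hv (δ / 2) (half_pos hδ)
  obtain ⟨x, hxX, t, ht, hx, hxw⟩ := mem_tangentCone0_iff.1 hw (δ / 2) (half_pos hδ)
  refine ⟨x, hxX, t, ht, hx.trans (half_lt_self hδ), ?_⟩
  calc dist (t⁻¹ • x) v ≤ dist (t⁻¹ • x) w + dist w v := dist_triangle _ _ _
    _ < δ / 2 + δ / 2 := add_lt_add hxw (by rwa [dist_comm])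
    _ = δ := add_halves δ

theorem frequently_nonempty_inv_smul_inter_sphere {v : E} (hv : v ∈ tangentCone0 X)
    (hv0 : v ≠ 0) : ∃ᶠ t in 𝓝[>] (0 : ℝ), ((t⁻¹ • X) ∩ sphere 0 1).Nonempty := by
  refine frequently_iff.2 fun hU => ?_
  obtain ⟨r, hr, hrU⟩ := mem_nhdsGT_iff_exists_Ioo_subset.1 hU
  obtain ⟨x, hxX, t, -, hx, hxv⟩ :=
    mem_tangentCone0_iff.1 hv (min r ‖v‖) (lt_min hr (norm_pos_iff.2 hv0))
  have hx0 : x ≠ 0 := by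
    rintro rfl
    rw [smul_zero, dist_zero_left] at hxv
    exact (hxv.trans_le (min_le_right _ _)).false
  refine ⟨‖x‖, hrU ⟨norm_pos_iff.2 hx0, hx.trans_le (min_le_left _ _)⟩, ‖x‖⁻¹ • x,
    smul_mem_smul_set hxX, ?_⟩
  rw [mem_sphere_zero_iff_norm, norm_smul, norm_inv, norm_norm,
    inv_mul_cancel₀ (norm_ne_zero_iff.2 hx0)]

end TangentCone

theorem stmt_17_general {m : ℕ} (X : Set (EuclideanSpace ℝ (Fin m))) (C ε : ℝ) (hε : 0 < ε)
    (hH : Filter.Tendsto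
      (fun t : ℝ => Metric.hausdorffDist ((t⁻¹ • X) ∩ Metric.sphere 0 1)
        (tangentCone0 X ∩ Metric.sphere 0 1))
      (𝓝[>] (0:ℝ)) (𝓝 0))
    (hU : ∀ t ∈ Set.Ioc (0:ℝ) ε, IsLNE ((t⁻¹ • X) ∩ Metric.sphere 0 1) C) :
    IsLNE (tangentCone0 X ∩ Metric.sphere 0 1) C := by
  intro v hv
  have hv0 : v ≠ 0 := ne_zero_of_mem_unit_sphere ⟨v, hv.2⟩
  obtain ⟨t, ht, htX⟩ := exists_seq_forall_of_frequently
    ((frequently_nonempty_inv_smul_inter_sphere hv.1 hv0).and_eventually (Ioc_mem_nhdsGT hε))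
  exact IsLNE.of_tendsto_hausdorffDist (isCompact_sphere 0 1) (fun _ => inter_subset_right)
    inter_subset_right (isClosed_tangentCone0.inter isClosed_sphere) (fun n => (htX n).1)
    (hH.comp ht) (fun n => hU _ (htX n).2) v hv

theorem stmt_17 {m : ℕ} (X : Set (EuclideanSpace ℝ (Fin m))) (hX : IsClosed X)
    (h0 : (0 : EuclideanSpace ℝ (Fin m)) ∈ X) (C ε : ℝ) (hC : 1 ≤ C) (hε : 0 < ε)
    (hH : Filter.Tendsto
      (fun t : ℝ => Metric.hausdorffDist ((t⁻¹ • X) ∩ Metric.sphere 0 1)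
        (tangentCone0 X ∩ Metric.sphere 0 1))
      (𝓝[>] (0:ℝ)) (𝓝 0))
    (hU : ∀ t ∈ Set.Ioc (0:ℝ) ε, IsLNE ((t⁻¹ • X) ∩ Metric.sphere 0 1) C) :
    IsLNE (tangentCone0 X ∩ Metric.sphere 0 1) C :=
  stmt_17_general X C ε hε hH hU
end
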